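/- Let L > 0 satisfy D_f(a,b) ≤ L · D_ψ(a,b) for all a, b ∈ ℝⁿ, let κ ∈ [0,1) and let γ > 0 with γ·L ≤ 1 − κ. If x, x⁺ ∈ ℝⁿ satisfy the mirror-descent update (‖x⁺‖² + 1)x⁺ = (‖x‖² + 1)x − γ·∇f(x), then for every u ∈ ℝⁿ: D_ψ(u,x⁺) + γ·f(x⁺) ≤ D_ψ(u,x) − κ·D_ψ(x⁺,x) − γ·D_f(u,x) + γ·f(u). -/

import Mathlib

open scoped RealInnerProductSpace BigOperators

noncomputable def phaseObj (m n : ℕ) (a : Fin m → EuclideanSpace ℝ (Fin n))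
    (xbar : EuclideanSpace ℝ (Fin n)) (ε : Fin m → ℝ)
    (x : EuclideanSpace ℝ (Fin n)) : ℝ :=
  (1 / (4 * (m : ℝ))) * ∑ r, (⟪a r, x⟫ ^ 2 - ⟪a r, xbar⟫ ^ 2) ^ 2
    - (1 / (2 * (m : ℝ))) * ∑ r, ε r * (⟪a r, x⟫ ^ 2 - ⟪a r, xbar⟫ ^ 2)
    + (∑ r, ε r ^ 2) / (4 * (m : ℝ))

noncomputable def phaseGrad (m n : ℕ) (a : Fin m → EuclideanSpace ℝ (Fin n))
    (xbar : EuclideanSpace ℝ (Fin n)) (ε : Fin m → ℝ)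
    (x : EuclideanSpace ℝ (Fin n)) : EuclideanSpace ℝ (Fin n) :=
  (1 / (m : ℝ)) • ∑ r, ((⟪a r, x⟫ ^ 2 - ⟪a r, xbar⟫ ^ 2 - ε r) * ⟪a r, x⟫) • a r

noncomputable def entropy (n : ℕ) (x : EuclideanSpace ℝ (Fin n)) : ℝ :=
  (1 / 4) * ‖x‖ ^ 4 + (1 / 2) * ‖x‖ ^ 2

noncomputable def entropyGrad (n : ℕ) (x : EuclideanSpace ℝ (Fin n)) :
    EuclideanSpace ℝ (Fin n) :=
  (‖x‖ ^ 2 + 1) • x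

/-- Bregman divergence of the noisy phase-retrieval objective `f`. -/
noncomputable def Df (m n : ℕ) (a : Fin m → EuclideanSpace ℝ (Fin n))
    (xbar : EuclideanSpace ℝ (Fin n)) (ε : Fin m → ℝ)
    (x z : EuclideanSpace ℝ (Fin n)) : ℝ :=
  phaseObj m n a xbar ε x - phaseObj m n a xbar ε z - ⟪phaseGrad m n a xbar ε z, x - z⟫

/-- Bregman divergence of the entropy `ψ`. -/
noncomputable def Dψ (n : ℕ) (x z : EuclideanSpace ℝ (Fin n)) : ℝ :=
  entropy n x - entropy n z - ⟪entropyGrad n z, x - z⟫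

/-!
The update says `∇ψ(x) - ∇ψ(x⁺) = γ ∇f(x)`, so the three-point identity of Bregman divergences
turns `D_ψ(u,x⁺) - D_ψ(u,x) + D_ψ(x⁺,x)` into `γ ⟪∇f(x), u - x⁺⟫`. Expanding `D_f(u,x)` and
`D_f(x⁺,x)` leaves `γ D_f(x⁺,x) ≤ (1 - κ) D_ψ(x⁺,x)` to be shown, which is relative smoothness
together with `γ L ≤ 1 - κ` and `D_ψ ≥ 0`.
-/

section Bregman

variable {E : Type*} [NormedAddCommGroup E] [InnerProductSpace ℝ E]

noncomputable def bregman (φ : E → ℝ) (φ' : E → E) (x z : E) : ℝ :=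
  φ x - φ z - ⟪φ' z, x - z⟫

theorem bregman_three_point (φ : E → ℝ) (φ' : E → E) (u x y : E) :
    bregman φ φ' u y - bregman φ φ' u x + bregman φ φ' y x = ⟪φ' x - φ' y, u - y⟫ := by
  simp only [bregman, inner_sub_left, inner_sub_right]
  ring

theorem bregman_mirror_step {φ f : E → ℝ} {φ' f' : E → E} {L κ γ : ℝ} {x y : E}
    (hsmooth : bregman f f' y x ≤ L * bregman φ φ' y x) (hnonneg : 0 ≤ bregman φ φ' y x)
    (hγ : 0 ≤ γ) (hγL : γ * L ≤ 1 - κ) (hstep : φ' y = φ' x - γ • f' x) (u : E) :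
    bregman φ φ' u y + γ * f y ≤
      bregman φ φ' u x - κ * bregman φ φ' y x - γ * bregman f f' u x + γ * f u := by
  have hthree := bregman_three_point φ φ' u x y
  rw [hstep, sub_sub_cancel, real_inner_smul_left] at hthree
  have hrel : γ * bregman f f' y x ≤ (1 - κ) * bregman φ φ' y x :=
    calc γ * bregman f f' y x ≤ γ * L * bregman φ φ' y x := by
          rw [mul_assoc]; exact mul_le_mul_of_nonneg_left hsmooth hγ
      _ ≤ (1 - κ) * bregman φ φ' y x := mul_le_mul_of_nonneg_right hγL hnonneg
  simp only [bregman, inner_sub_right] at hthree hrel ⊢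
  linarith

end Bregman

theorem Dψ_nonneg (n : ℕ) (x z : EuclideanSpace ℝ (Fin n)) : 0 ≤ Dψ n x z := by
  have hcs : ⟪z, x⟫ ≤ ‖z‖ * ‖x‖ := real_inner_le_norm z x
  simp only [Dψ, entropy, entropyGrad, real_inner_smul_left, inner_sub_right,
    real_inner_self_eq_norm_sq]
  nlinarith [sq_nonneg (‖x‖ - ‖z‖), sq_nonneg (‖x‖ + ‖z‖), sq_nonneg (‖x‖ ^ 2 - ‖z‖ ^ 2),
    sq_nonneg (‖x‖ * ‖z‖ - ‖z‖ ^ 2), mul_nonneg (norm_nonneg x) (norm_nonneg z)]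

theorem stmt1_general (n m : ℕ) (a : Fin m → EuclideanSpace ℝ (Fin n))
    (xbar : EuclideanSpace ℝ (Fin n)) (ε : Fin m → ℝ)
    (L : ℝ)
    (hL : ∀ p q : EuclideanSpace ℝ (Fin n), Df m n a xbar ε p q ≤ L * Dψ n p q)
    (κ : ℝ)
    (γ : ℝ) (hγ : 0 < γ) (hγL : γ * L ≤ 1 - κ)
    (x xp : EuclideanSpace ℝ (Fin n))
    (hupdate : (‖xp‖ ^ 2 + 1) • xp = (‖x‖ ^ 2 + 1) • x - γ • phaseGrad m n a xbar ε x) :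
    ∀ u : EuclideanSpace ℝ (Fin n),
      Dψ n u xp + γ * phaseObj m n a xbar ε xp ≤
        Dψ n u x - κ * Dψ n xp x - γ * Df m n a xbar ε u x
          + γ * phaseObj m n a xbar ε u :=
  bregman_mirror_step (φ' := entropyGrad n) (hL xp x) (Dψ_nonneg n xp x) hγ.le hγL hupdate

/-- one-step mirror-descent inequality. -/
theorem stmt1 (n m : ℕ) (hm : 1 ≤ m) (a : Fin m → EuclideanSpace ℝ (Fin n))
    (xbar : EuclideanSpace ℝ (Fin n)) (ε : Fin m → ℝ)
    (L : ℝ) (hLpos : 0 < L)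
    (hL : ∀ p q : EuclideanSpace ℝ (Fin n), Df m n a xbar ε p q ≤ L * Dψ n p q)
    (κ : ℝ) (hκ0 : 0 ≤ κ) (hκ1 : κ < 1)
    (γ : ℝ) (hγ : 0 < γ) (hγL : γ * L ≤ 1 - κ)
    (x xp : EuclideanSpace ℝ (Fin n))
    (hupdate : (‖xp‖ ^ 2 + 1) • xp = (‖x‖ ^ 2 + 1) • x - γ • phaseGrad m n a xbar ε x) :
    ∀ u : EuclideanSpace ℝ (Fin n),
      Dψ n u xp + γ * phaseObj m n a xbar ε xp ≤
        Dψ n u x - κ * Dψ n xp x - γ * Df m n a xbar ε u x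
          + γ * phaseObj m n a xbar ε u :=
  stmt1_general n m a xbar ε L hL κ γ hγ hγL x xp hupdate
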